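/- Let O5 be the set of projective points of PG(3,q) outside O1 ∪ O2 ∪ O3 ∪ O4, where O1 = {[1, f(x,y), x, y] : x, y ∈ F}, O2 = {[0, x, 1, y] : x, y ∈ F}, O3 = {[0, x, 0, 1] : x ∈ F}, O4 = {[0,1,0,0]}. Then O5 is the orbit of [1,1,0,0] under G, the action of G on O5 is regular (free and transitive), and |O5| = q^2·(q − 1). -/

import Mathlib

open Matrix

noncomputable section

abbrev F (n : ℕ) : Type := GaloisField 2 (2 * n + 1)

def om (n : ℕ) : ℕ := 2 ^ (n + 1)

def ff (n : ℕ) (x y : F n) : F n := x ^ (om n + 2) + x * y + y ^ om n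

def Mmat (n : ℕ) (r a b : F n) : Matrix (Fin 4) (Fin 4) (F n) :=
  !![1, ff n a b, a, b;
     0, r ^ (om n + 2), 0, 0;
     0, (a ^ (om n + 1) + b) * r, r, a ^ om n * r;
     0, a * r ^ (om n + 1), 0, r ^ (om n + 1)]

/-- The four spanning vectors of the polar line `π[x]`. -/
def polarGens (n : ℕ) (x : Fin 4 → F n) : Set (Fin 4 → F n) :=
  {![0, (x 0 * x 1 + x 2 * x 3) ^ 2 ^ n, x 0 ^ om n, x 2 ^ om n],
   ![(x 0 * x 1 + x 2 * x 3) ^ 2 ^ n, 0, x 3 ^ om n, x 1 ^ om n],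
   ![x 0 ^ om n, x 3 ^ om n, 0, (x 0 * x 1 + x 2 * x 3) ^ 2 ^ n],
   ![x 2 ^ om n, x 1 ^ om n, (x 0 * x 1 + x 2 * x 3) ^ 2 ^ n, 0]}

/-- The polar line `π[x]`, as a subspace of `F⁴`. -/
def polarSpan (n : ℕ) (x : Fin 4 → F n) : Submodule (F n) (Fin 4 → F n) :=
  Submodule.span (F n) (polarGens n x)

/-- The point set of `PG(3,q)`. -/
abbrev PG3 (n : ℕ) : Type := Projectivization (F n) (Fin 4 → F n)

/-- The graph `A(q)`: projective points of `PG(3,q)`, with `[x]` adjacent to `[y]`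
iff `[x] ≠ [y]` and `y ∈ π[x]` (equivalently, `x ∈ π[y]`, the relation being
symmetric).  Membership `y ∈ π[x]` does not depend on the choice of
representatives, so it is tested on the canonical representatives. -/
def Aq (n : ℕ) : SimpleGraph (PG3 n) where
  Adj P Q := P ≠ Q ∧ Q.rep ∈ polarSpan n P.rep ∧ P.rep ∈ polarSpan n Q.rep
  symm := ⟨fun _ _ h => ⟨h.1.symm, h.2.2, h.2.1⟩⟩
  loopless := ⟨fun _ h => h.1 rfl⟩

/-- A vector with a coordinate equal to `1` is nonzero. -/
lemma vne {n : ℕ} (v : Fin 4 → F n) (i : Fin 4) (h : v i = 1) : v ≠ 0 := by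
  intro h0; rw [h0] at h; simp at h

def O1set (n : ℕ) : Set (PG3 n) :=
  {P | ∃ x y : F n, P = Projectivization.mk (F n) ![1, ff n x y, x, y] (vne _ 0 (by simp))}

def O2set (n : ℕ) : Set (PG3 n) :=
  {P | ∃ x y : F n, P = Projectivization.mk (F n) ![0, x, 1, y] (vne _ 2 (by simp))}

def O3set (n : ℕ) : Set (PG3 n) :=
  {P | ∃ x : F n, P = Projectivization.mk (F n) ![0, x, 0, 1] (vne _ 3 (by simp))}

def O4set (n : ℕ) : Set (PG3 n) :=
  {Projectivization.mk (F n) ![0, 1, 0, 0] (vne _ 1 (by simp))}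

/-- `O5` : all projective points outside `O1 ∪ O2 ∪ O3 ∪ O4`. -/
def O5set (n : ℕ) : Set (PG3 n) :=
  Set.univ \ (O1set n ∪ O2set n ∪ O3set n ∪ O4set n)

/-!
Every point of O5 lies in the chart x₀ ≠ 0, so it is [1, u, c, d] with u ≠ f(c, d). A direct
computation (using (x^ω)^ω = x² and characteristic 2) shows that M(r; a, b) maps [1, u, c, d] to
[1, u', c', d'] with c' = a + cr, d' = b + c a^ω r + d r^(ω+1) and
u' - f(c', d') = (u - f(c, d)) r^(ω+2). As gcd(ω + 2, q - 1) = 1, x ↦ x^(ω+2) is a bijection of F,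
so for given source and target in O5 the element r is determined, and then a and b. Counting the
pairs (u - f(c, d), (c, d)) ∈ F^* × F² gives |O5| = q²(q - 1).
-/

theorem FiniteField.pow_bijective_of_coprime {K : Type*} [Field K] [Finite K] {k : ℕ}
    (hk : k ≠ 0) (hcop : (Nat.card K - 1).Coprime k) : Function.Bijective fun x : K => x ^ k := by
  refine Finite.injective_iff_bijective.mp fun x y hxy => ?_
  rcases eq_or_ne x 0 with rfl | hx
  · exact ((pow_eq_zero_iff hk).mp (hxy.symm.trans (zero_pow hk))).symm
  rcases eq_or_ne y 0 with rfl | hy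
  · exact (pow_eq_zero_iff hk).mp (hxy.trans (zero_pow hk))
  have hunits : (Nat.card Kˣ).Coprime k := by rwa [Nat.card_units]
  simpa using congrArg Units.val
    (hunits.pow_left_bijective.injective (a₁ := Units.mk0 x hx) (a₂ := Units.mk0 y hy)
      (Units.ext hxy))

theorem Projectivization.apply_eq_zero_iff_of_mk_eq {K ι : Type*} [Field K] {v w : ι → K}
    {hv : v ≠ 0} {hw : w ≠ 0} (h : mk K v hv = mk K w hw) (i : ι) : v i = 0 ↔ w i = 0 := by
  obtain ⟨a, rfl⟩ := (mk_eq_mk_iff K v w hv hw).mp h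
  simp [Units.smul_def]

namespace SuzukiTits

variable {n : ℕ}

theorem nat_card_F (n : ℕ) : Nat.card (F n) = 2 ^ (2 * n + 1) :=
  GaloisField.card 2 (2 * n + 1) (by omega)

theorem om_ne_zero (n : ℕ) : om n ≠ 0 := by simp [om]

theorem pow_om_add (x y : F n) : (x + y) ^ om n = x ^ om n + y ^ om n :=
  add_pow_char_pow ..

theorem pow_om_pow_om (x : F n) : (x ^ om n) ^ om n = x ^ 2 := by
  have : Fintype (F n) := Fintype.ofFinite _
  have hq : Fintype.card (F n) = 2 ^ (2 * n + 1) := by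
    rw [← Nat.card_eq_fintype_card, nat_card_F]
  calc (x ^ om n) ^ om n = (x ^ Fintype.card (F n)) ^ 2 := by
        rw [← pow_mul, ← pow_mul, hq, om]; congr 1; ring
    _ = x ^ 2 := by rw [FiniteField.pow_card]

theorem coprime_om_add_two (n : ℕ) : (2 ^ (2 * n + 1) - 1).Coprime (om n + 2) := by
  have hq : 2 ^ (2 * n + 1) - 1 = 1 + (om n + 2) * (2 ^ n - 1) := by
    zify [Nat.one_le_two_pow (n := n), Nat.one_le_two_pow (n := 2 * n + 1)]
    rw [om]; push_cast; ring
  rw [hq, Nat.coprime_add_mul_left_left]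
  exact Nat.coprime_one_left _

theorem pow_om_add_two_bijective (n : ℕ) : Function.Bijective fun x : F n => x ^ (om n + 2) :=
  FiniteField.pow_bijective_of_coprime (by omega) (by rw [nat_card_F]; exact coprime_om_add_two n)

theorem ff_shift (a b c d r : F n) :
    ff n (a + c * r) (b + c * a ^ om n * r + d * r ^ (om n + 1))
      = ff n a b + ff n c d * r ^ (om n + 2) + c * (a ^ (om n + 1) + b) * r
        + d * a * r ^ (om n + 1) := by
  simp only [ff, pow_add, pow_om_add, mul_pow, pow_om_pow_om, pow_one]
  rw [← sub_eq_zero]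
  ring_nf
  simp only [CharTwo.two_eq_zero, mul_zero, add_zero]

theorem vecMul_Mmat (u c d r a b : F n) :
    ![1, u, c, d] ᵥ* Mmat n r a b
      = ![1, ff n (a + c * r) (b + c * a ^ om n * r + d * r ^ (om n + 1))
              + (u - ff n c d) * r ^ (om n + 2),
          a + c * r, b + c * a ^ om n * r + d * r ^ (om n + 1)] := by
  rw [ff_shift]
  ext i
  fin_cases i <;> simp [Mmat, vecMul, dotProduct, Fin.sum_univ_four] <;> ring

theorem vecMul_Mmat_basepoint (r a b : F n) :
    ![1, 1, 0, 0] ᵥ* Mmat n r a b = ![1, ff n a b + r ^ (om n + 2), a, b] := by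
  simp [vecMul_Mmat, ff, om_ne_zero]

abbrev pt (u c d : F n) : PG3 n := Projectivization.mk (F n) ![1, u, c, d] (vne _ 0 rfl)

theorem pt_inj {u c d u' c' d' : F n} : pt u c d = pt u' c' d' ↔ u = u' ∧ c = c' ∧ d = d' := by
  refine ⟨fun h => ?_, by rintro ⟨rfl, rfl, rfl⟩; rfl⟩
  obtain ⟨t, ht⟩ := (Projectivization.mk_eq_mk_iff' _ _ _ _ _).mp h
  have ht1 : t = 1 := by simpa using congrFun ht 0
  subst ht1
  simp only [one_smul] at ht
  exact ⟨(congrFun ht 1).symm, (congrFun ht 2).symm, (congrFun ht 3).symm⟩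

theorem mk_eq_pt {v : Fin 4 → F n} (hv : v ≠ 0) (hv0 : v 0 ≠ 0) :
    Projectivization.mk (F n) v hv = pt (v 1 / v 0) (v 2 / v 0) (v 3 / v 0) :=
  (Projectivization.mk_eq_mk_iff' _ _ _ _ _).mpr
    ⟨v 0, by ext i; fin_cases i <;> simp [hv0, mul_div_cancel₀]⟩

theorem mk_mem_O2set_union_O3set_union_O4set {v : Fin 4 → F n} (hv : v ≠ 0) (hv0 : v 0 = 0) :
    Projectivization.mk (F n) v hv ∈ O2set n ∪ O3set n ∪ O4set n := by
  by_cases hv2 : v 2 = 0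
  · by_cases hv3 : v 3 = 0
    · have hv1 : v 1 ≠ 0 := fun hv1 => hv (by ext i; fin_cases i <;> assumption)
      refine Or.inr ((Projectivization.mk_eq_mk_iff' _ _ _ _ _).mpr ⟨v 1, ?_⟩)
      ext i; fin_cases i <;> simp [hv0, hv2, hv3]
    · refine Or.inl (Or.inr ⟨v 1 / v 3, (Projectivization.mk_eq_mk_iff' _ _ _ _ _).mpr ⟨v 3, ?_⟩⟩)
      ext i; fin_cases i <;> simp [hv0, hv2, hv3, mul_div_cancel₀]
  · refine Or.inl (Or.inl ⟨v 1 / v 2, v 3 / v 2,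
      (Projectivization.mk_eq_mk_iff' _ _ _ _ _).mpr ⟨v 2, ?_⟩⟩)
    ext i; fin_cases i <;> simp [hv0, hv2, mul_div_cancel₀]

theorem pt_notMem_O2set_union_O3set_union_O4set (u c d : F n) :
    pt u c d ∉ O2set n ∪ O3set n ∪ O4set n := by
  rintro ((⟨x, y, h⟩ | ⟨x, h⟩) | h) <;>
    simpa using Projectivization.apply_eq_zero_iff_of_mk_eq h 0

theorem mem_O5set_iff (P : PG3 n) :
    P ∈ O5set n ↔ ∃ u c d : F n, u ≠ ff n c d ∧ P = pt u c d := by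
  have hO5 : O5set n = (O1set n ∪ (O2set n ∪ O3set n ∪ O4set n))ᶜ := by
    simp only [O5set, ← Set.compl_eq_univ_sdiff, Set.union_assoc]
  rw [hO5, Set.mem_compl_iff, Set.mem_union, not_or]
  induction P using Projectivization.ind with | h v hv => ?_
  constructor
  · rintro ⟨hO1, hO234⟩
    have hv0 : v 0 ≠ 0 := fun hv0 => hO234 (mk_mem_O2set_union_O3set_union_O4set hv hv0)
    rw [mk_eq_pt hv hv0] at hO1 ⊢
    exact ⟨_, _, _, fun h => hO1 ⟨_, _, by rw [h]⟩, rfl⟩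
  · rintro ⟨u, c, d, hu, hP⟩
    rw [hP]
    refine ⟨?_, pt_notMem_O2set_union_O3set_union_O4set u c d⟩
    rintro ⟨x, y, h⟩
    obtain ⟨rfl, rfl, rfl⟩ := pt_inj.mp h
    exact hu rfl

theorem O5set_eq_orbit (n : ℕ) :
    O5set n = {P : PG3 n | ∃ r a b : F n, r ≠ 0 ∧
        ∃ h : (![1, 1, 0, 0] : Fin 4 → F n) ᵥ* Mmat n r a b ≠ 0,
          P = Projectivization.mk (F n) ((![1, 1, 0, 0] : Fin 4 → F n) ᵥ* Mmat n r a b) h} := by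
  ext P
  simp only [Set.mem_ofPred_eq, mem_O5set_iff, vecMul_Mmat_basepoint]
  constructor
  · rintro ⟨u, c, d, hu, rfl⟩
    obtain ⟨r, hr⟩ := (pow_om_add_two_bijective n).surjective (u - ff n c d)
    have hr0 : r ≠ 0 := by
      rintro rfl
      exact hu (sub_eq_zero.mp (by simpa [om_ne_zero] using hr.symm))
    refine ⟨r, c, d, hr0, vne _ 0 rfl, ?_⟩
    simp only [hr, add_sub_cancel]
  · rintro ⟨r, a, b, hr, -, rfl⟩
    exact ⟨_, a, b, by simpa using pow_ne_zero (om n + 2) hr, rfl⟩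

theorem exists_eq_smul_of_mk_mem_O5set {x : Fin 4 → F n} (hx : x ≠ 0)
    (h : Projectivization.mk (F n) x hx ∈ O5set n) :
    ∃ s : F n, s ≠ 0 ∧ ∃ u c d : F n, u ≠ ff n c d ∧ x = s • ![1, u, c, d] := by
  obtain ⟨u, c, d, hu, hP⟩ := (mem_O5set_iff _).mp h
  obtain ⟨s, hs⟩ := (Projectivization.mk_eq_mk_iff _ _ _ _ _).mp hP
  exact ⟨s, s.ne_zero, u, c, d, hu, hs.symm⟩

theorem exists_vecMul_Mmat_eq {u c d v e g : F n} (hu : u ≠ ff n c d) (hv : v ≠ ff n e g) :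
    ∃ r a b : F n, r ≠ 0 ∧ ![1, u, c, d] ᵥ* Mmat n r a b = ![1, v, e, g] := by
  have hu' : u - ff n c d ≠ 0 := sub_ne_zero.mpr hu
  obtain ⟨r, hr : r ^ (om n + 2) = _⟩ :=
    (pow_om_add_two_bijective n).surjective ((v - ff n e g) / (u - ff n c d))
  have hr0 : r ≠ 0 := by
    rintro rfl
    refine div_ne_zero (sub_ne_zero.mpr hv) hu' ?_
    simpa [om_ne_zero] using hr.symm
  set a := e - c * r
  set b := g - c * a ^ om n * r - d * r ^ (om n + 1)
  have ha : a + c * r = e := sub_add_cancel e (c * r)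
  have hb : b + c * a ^ om n * r + d * r ^ (om n + 1) = g := by simp only [b]; ring
  refine ⟨r, a, b, hr0, ?_⟩
  rw [vecMul_Mmat, ha, hb, hr, mul_div_cancel₀ _ hu', add_sub_cancel]

theorem eq_of_vecMul_Mmat_eq {u c d r a b r' a' b' : F n} (hu : u ≠ ff n c d)
    (h : ![1, u, c, d] ᵥ* Mmat n r a b = ![1, u, c, d] ᵥ* Mmat n r' a' b') :
    r = r' ∧ a = a' ∧ b = b' := by
  rw [vecMul_Mmat, vecMul_Mmat] at h
  have hc : a + c * r = a' + c * r' := by simpa using congrFun h 2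
  have hd : b + c * a ^ om n * r + d * r ^ (om n + 1)
      = b' + c * a' ^ om n * r' + d * r' ^ (om n + 1) := by simpa using congrFun h 3
  have hr : (u - ff n c d) * r ^ (om n + 2) = (u - ff n c d) * r' ^ (om n + 2) := by
    simpa [hc, hd] using congrFun h 1
  obtain rfl : r = r' := (pow_om_add_two_bijective n).injective
    (mul_left_cancel₀ (sub_ne_zero.mpr hu) hr)
  obtain rfl : a = a' := add_right_cancel hc
  exact ⟨rfl, rfl, add_right_cancel (add_right_cancel hd)⟩

theorem exists_smul_vecMul_Mmat_eq_iff {s s' : F n} (hs : s ≠ 0) (hs' : s' ≠ 0)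
    (u c d v e g r a b : F n) :
    (∃ t : F n, t ≠ 0 ∧ (s • ![1, u, c, d]) ᵥ* Mmat n r a b = t • s' • ![1, v, e, g]) ↔
      ![1, u, c, d] ᵥ* Mmat n r a b = ![1, v, e, g] := by
  rw [smul_vecMul]
  constructor
  · rintro ⟨t, -, h⟩
    have h0 : s = t * s' := by simpa [vecMul_Mmat] using congrFun h 0
    rw [smul_smul, ← h0] at h
    exact smul_right_injective _ hs h
  · intro h
    refine ⟨s / s', div_ne_zero hs hs', ?_⟩
    rw [h, smul_smul, div_mul_cancel₀ _ hs']

theorem nat_card_O5set (n : ℕ) :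
    Nat.card (O5set n) = (2 ^ (2 * n + 1)) ^ 2 * (2 ^ (2 * n + 1) - 1) := by
  let φ : (F n)ˣ × F n × F n → O5set n := fun p =>
    ⟨pt (p.1 + ff n p.2.1 p.2.2) p.2.1 p.2.2, (mem_O5set_iff _).mpr ⟨_, _, _, by simp, rfl⟩⟩
  have hφ : Function.Bijective φ := by
    constructor
    · rintro ⟨w, c, d⟩ ⟨w', c', d'⟩ h
      obtain ⟨hw, rfl, rfl⟩ := pt_inj.mp (congrArg Subtype.val h)
      simpa [Units.ext_iff] using hw
    · rintro ⟨P, hP⟩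
      obtain ⟨u, c, d, hu, rfl⟩ := (mem_O5set_iff P).mp hP
      exact ⟨(Units.mk0 (u - ff n c d) (sub_ne_zero.mpr hu), c, d), by simp [φ]⟩
  rw [← Nat.card_eq_of_bijective φ hφ, Nat.card_prod, Nat.card_prod, Nat.card_units, nat_card_F]
  ring

end SuzukiTits

open SuzukiTits in
theorem O5_regular_orbit_general (n : ℕ) :
    O5set n = {P : PG3 n | ∃ r a b : F n, r ≠ 0 ∧
        ∃ h : (![1, 1, 0, 0] : Fin 4 → F n) ᵥ* Mmat n r a b ≠ 0,
          P = Projectivization.mk (F n) ((![1, 1, 0, 0] : Fin 4 → F n) ᵥ* Mmat n r a b) h} ∧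
    (∀ (x y : Fin 4 → F n) (hx : x ≠ 0) (hy : y ≠ 0),
      Projectivization.mk (F n) x hx ∈ O5set n →
      Projectivization.mk (F n) y hy ∈ O5set n →
      ∃! A : Matrix (Fin 4) (Fin 4) (F n),
        (∃ r a b : F n, r ≠ 0 ∧ A = Mmat n r a b) ∧
        ∃ t : F n, t ≠ 0 ∧ x ᵥ* A = t • y) ∧
    Nat.card (O5set n) = (2 ^ (2 * n + 1)) ^ 2 * (2 ^ (2 * n + 1) - 1) := by
  refine ⟨O5set_eq_orbit n, ?_, nat_card_O5set n⟩
  intro x y hx hy hxm hym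
  obtain ⟨s, hs, u, c, d, hu, rfl⟩ := exists_eq_smul_of_mk_mem_O5set hx hxm
  obtain ⟨s', hs', v, e, g, hv, rfl⟩ := exists_eq_smul_of_mk_mem_O5set hy hym
  obtain ⟨r, a, b, hr, hM⟩ := exists_vecMul_Mmat_eq hu hv
  refine ⟨Mmat n r a b, ⟨⟨r, a, b, hr, rfl⟩, (exists_smul_vecMul_Mmat_eq_iff hs hs' ..).mpr hM⟩, ?_⟩
  rintro _ ⟨⟨r', a', b', -, rfl⟩, hM'⟩
  obtain ⟨rfl, rfl, rfl⟩ :=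
    eq_of_vecMul_Mmat_eq hu (((exists_smul_vecMul_Mmat_eq_iff hs hs' ..).mp hM').trans hM.symm)
  rfl

theorem O5_regular_orbit (n : ℕ) (hn : 1 ≤ n) :
    O5set n = {P : PG3 n | ∃ r a b : F n, r ≠ 0 ∧
        ∃ h : (![1, 1, 0, 0] : Fin 4 → F n) ᵥ* Mmat n r a b ≠ 0,
          P = Projectivization.mk (F n) ((![1, 1, 0, 0] : Fin 4 → F n) ᵥ* Mmat n r a b) h} ∧
    (∀ (x y : Fin 4 → F n) (hx : x ≠ 0) (hy : y ≠ 0),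
      Projectivization.mk (F n) x hx ∈ O5set n →
      Projectivization.mk (F n) y hy ∈ O5set n →
      ∃! A : Matrix (Fin 4) (Fin 4) (F n),
        (∃ r a b : F n, r ≠ 0 ∧ A = Mmat n r a b) ∧
        ∃ t : F n, t ≠ 0 ∧ x ᵥ* A = t • y) ∧
    Nat.card (O5set n) = (2 ^ (2 * n + 1)) ^ 2 * (2 ^ (2 * n + 1) - 1) :=
  O5_regular_orbit_general n
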